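/- (Bias bound for the isotropic ES gradient estimator, explicit constants.) The one-sample antithetic ES gradient estimator satisfies ‖E_{g~N(0,I_d)}[z_ES(g)] − ∇F(θ)‖ ≤ 3·τ·σ²·d². -/

import Mathlib

open MeasureTheory ProbabilityTheory
open scoped RealInnerProductSpace

/-- The standard Gaussian measure `N(0, I_n)` on `ℝ^n`. -/
noncomputable def stdGaussian (n : ℕ) : Measure (EuclideanSpace ℝ (Fin n)) :=
  Measure.map (WithLp.toLp 2) (Measure.pi (fun _ => gaussianReal 0 1))

/-!
Since the covariance of the standard Gaussian is the identity, `E[⟪g, a⟫ g] = a`; with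
`a = ∇F(θ)` this turns the bias into `E[(v(g) - ⟪g, ∇F(θ)⟫) g]`, whose norm is at most
`τ σ² E‖g‖⁴`. Writing `‖g‖²` as the sum of the `d` squared coordinates and applying
Cauchy–Schwarz gives `E‖g‖⁴ ≤ d · ∑ᵢ E[gᵢ⁴] = 3 d²`, the fourth moment `3` of `N(0, 1)` coming
from Gaussian integration by parts, `E[X^(n+2)] = (n + 1) E[X^n]`.
-/

namespace ProbabilityTheory

lemma hasDerivAt_gaussianPDFReal_zero_one (x : ℝ) :
    HasDerivAt (gaussianPDFReal 0 1) (-x * gaussianPDFReal 0 1 x) x := by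
  have h : HasDerivAt (fun x : ℝ => -(x - 0) ^ 2 / (2 * ((1 : NNReal) : ℝ))) (-x) x :=
    (((hasDerivAt_id x).sub_const 0).pow 2).neg.div_const _ |>.congr_deriv (by simp; ring)
  rw [gaussianPDFReal_def]
  exact (h.exp.const_mul _).congr_deriv (by ring)

lemma integrable_pow_gaussianReal (n : ℕ) :
    Integrable (fun x : ℝ => x ^ n) (gaussianReal 0 1) :=
  (memLp_id_gaussianReal (μ := 0) (v := 1) n).integrable_norm_pow'.mono'
    (by fun_prop) (.of_forall fun x => by simp)

lemma integrable_pow_mul_gaussianPDFReal (n : ℕ) :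
    Integrable fun x : ℝ => x ^ n * gaussianPDFReal 0 1 x := by
  have h := integrable_pow_gaussianReal n
  rw [gaussianReal_of_var_ne_zero 0 one_ne_zero, gaussianPDF_def,
    integrable_withDensity_iff_integrable_smul' (by fun_prop)
      (.of_forall fun _ => ENNReal.ofReal_lt_top)] at h
  simpa [ENNReal.toReal_ofReal (gaussianPDFReal_nonneg _ _ _), mul_comm] using h

lemma integral_pow_add_two_gaussianReal (n : ℕ) :
    ∫ x, x ^ (n + 2) ∂gaussianReal 0 1 = (n + 1) * ∫ x, x ^ n ∂gaussianReal 0 1 := by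
  simp only [integral_gaussianReal_eq_integral_smul one_ne_zero, smul_eq_mul]
  have hderiv (x : ℝ) : HasDerivAt (fun x => x ^ (n + 1) * gaussianPDFReal 0 1 x)
      ((n + 1) * (x ^ n * gaussianPDFReal 0 1 x) - x ^ (n + 2) * gaussianPDFReal 0 1 x) x := by
    refine ((hasDerivAt_pow (n + 1) x).mul
      (hasDerivAt_gaussianPDFReal_zero_one x)).congr_deriv ?_
    push_cast
    ring
  have h := integral_eq_zero_of_hasDerivAt_of_integrable hderiv
    (((integrable_pow_mul_gaussianPDFReal n).const_mul _).sub
      (integrable_pow_mul_gaussianPDFReal (n + 2)))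
    (integrable_pow_mul_gaussianPDFReal (n + 1))
  rw [integral_sub ((integrable_pow_mul_gaussianPDFReal n).const_mul _)
    (integrable_pow_mul_gaussianPDFReal (n + 2)), integral_const_mul, sub_eq_zero] at h
  simp_rw [mul_comm (gaussianPDFReal 0 1 _)]
  exact h.symm

lemma integral_pow_four_gaussianReal : ∫ x, x ^ 4 ∂gaussianReal 0 1 = 3 := by
  rw [integral_pow_add_two_gaussianReal 2, integral_pow_add_two_gaussianReal 0]
  norm_num

section StdGaussian

variable {E : Type*} [NormedAddCommGroup E] [InnerProductSpace ℝ E] [FiniteDimensional ℝ E]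
  [MeasurableSpace E] [BorelSpace E]

lemma integrable_norm_pow_stdGaussian (n : ℕ) :
    Integrable (fun x : E => ‖x‖ ^ n) (stdGaussian E) :=
  (IsGaussian.memLp_id _ n (ENNReal.natCast_ne_top n)).integrable_norm_pow'

lemma integrable_inner_smul_stdGaussian (a : E) :
    Integrable (fun x : E => ⟪x, a⟫ • x) (stdGaussian E) := by
  refine ((integrable_norm_pow_stdGaussian 2).const_mul ‖a‖).mono' (by fun_prop)
    (.of_forall fun x => ?_)
  rw [norm_smul, Real.norm_eq_abs]
  nlinarith [abs_real_inner_le_norm x a, norm_nonneg x]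

lemma integral_inner_smul_stdGaussian (a : E) :
    ∫ x, ⟪x, a⟫ • x ∂(stdGaussian E) = a := by
  refine ext_inner_right ℝ fun y => ?_
  have hcov := covarianceBilin_apply (μ := stdGaussian E) IsGaussian.memLp_two_id a y
  simp only [covarianceBilin_stdGaussian, id_eq, integral_id_stdGaussian, sub_zero] at hcov
  calc ⟪∫ x, ⟪x, a⟫ • x ∂(stdGaussian E), y⟫
      = ∫ x, ⟪a, x⟫ * ⟪y, x⟫ ∂(stdGaussian E) := by
        rw [real_inner_comm, ← integral_inner (integrable_inner_smul_stdGaussian a)]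
        simp only [real_inner_smul_right, real_inner_comm a]
    _ = ⟪a, y⟫ := hcov.symm

lemma map_inner_stdGaussian {b : E} (hb : ‖b‖ = 1) :
    (stdGaussian E).map (fun x => ⟪b, x⟫) = gaussianReal 0 1 := by
  rw [show (fun x : E => ⟪b, x⟫) = innerSL ℝ b from rfl, IsGaussian.map_eq_gaussianReal,
    integral_strongDual_stdGaussian, variance_dual_stdGaussian, innerSL_apply_norm, hb]
  simp

lemma integral_inner_pow_four_stdGaussian {b : E} (hb : ‖b‖ = 1) :
    ∫ x, ⟪b, x⟫ ^ 4 ∂(stdGaussian E) = 3 := by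
  rw [← integral_pow_four_gaussianReal, ← map_inner_stdGaussian hb,
    integral_map (by fun_prop) (by fun_prop)]

lemma integrable_inner_pow_stdGaussian {b : E} (hb : ‖b‖ = 1) (n : ℕ) :
    Integrable (fun x => ⟪b, x⟫ ^ n) (stdGaussian E) := by
  have h := integrable_pow_gaussianReal n
  rwa [← map_inner_stdGaussian hb, integrable_map_measure (by fun_prop) (by fun_prop)] at h

lemma integral_norm_pow_four_stdGaussian_le :
    ∫ x, ‖x‖ ^ 4 ∂(stdGaussian E) ≤ 3 * (Module.finrank ℝ E) ^ 2 := by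
  set b := stdOrthonormalBasis ℝ E
  have hpoint (x : E) : ‖x‖ ^ 4 ≤ Module.finrank ℝ E * ∑ i, ⟪b i, x⟫ ^ 4 := by
    have h := sq_sum_le_card_mul_sum_sq (s := Finset.univ) (f := fun i => ⟪b i, x⟫ ^ 2)
    simpa only [b.sum_sq_inner_right, Finset.card_univ, Fintype.card_fin, ← pow_mul] using h
  have hint : Integrable (fun x => Module.finrank ℝ E * ∑ i, ⟪b i, x⟫ ^ 4) (stdGaussian E) :=
    (integrable_finsetSum _ fun i _ =>
      integrable_inner_pow_stdGaussian (b.norm_eq_one i) 4).const_mul _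
  calc ∫ x, ‖x‖ ^ 4 ∂(stdGaussian E)
      ≤ ∫ x, Module.finrank ℝ E * ∑ i, ⟪b i, x⟫ ^ 4 ∂(stdGaussian E) :=
        integral_mono (integrable_norm_pow_stdGaussian 4) hint hpoint
    _ = 3 * (Module.finrank ℝ E) ^ 2 := by
        rw [integral_const_mul, integral_finsetSum _ fun i _ =>
          integrable_inner_pow_stdGaussian (b.norm_eq_one i) 4]
        simp only [integral_inner_pow_four_stdGaussian (b.norm_eq_one _), Finset.sum_const,
          Finset.card_univ, Fintype.card_fin, nsmul_eq_mul]
        ring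

lemma norm_integral_smul_stdGaussian_sub_le {f : E → ℝ}
    (hf : AEStronglyMeasurable f (stdGaussian E)) {a : E} {C : ℝ} (hC : 0 ≤ C)
    (hfa : ∀ x, |f x - ⟪x, a⟫| ≤ C * ‖x‖ ^ 3) :
    ‖∫ x, f x • x ∂(stdGaussian E) - a‖ ≤ 3 * C * (Module.finrank ℝ E) ^ 2 := by
  have hbound (x : E) : ‖(f x - ⟪x, a⟫) • x‖ ≤ C * ‖x‖ ^ 4 := by
    rw [norm_smul, Real.norm_eq_abs]
    nlinarith [mul_le_mul_of_nonneg_right (hfa x) (norm_nonneg x)]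
  have herr : Integrable (fun x => (f x - ⟪x, a⟫) • x) (stdGaussian E) :=
    ((integrable_norm_pow_stdGaussian 4).const_mul C).mono'
      ((hf.sub (by fun_prop)).smul aestronglyMeasurable_id) (.of_forall hbound)
  have hf_int : Integrable (fun x => f x • x) (stdGaussian E) :=
    (herr.add (integrable_inner_smul_stdGaussian a)).congr
      (.of_forall fun x => by simp only [Pi.add_apply, sub_smul, sub_add_cancel])
  calc ‖∫ x, f x • x ∂(stdGaussian E) - a‖
      = ‖∫ x, (f x - ⟪x, a⟫) • x ∂(stdGaussian E)‖ := by
        simp only [sub_smul]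
        rw [integral_sub hf_int (integrable_inner_smul_stdGaussian a),
          integral_inner_smul_stdGaussian]
    _ ≤ ∫ x, C * ‖x‖ ^ 4 ∂(stdGaussian E) :=
        norm_integral_le_of_norm_le ((integrable_norm_pow_stdGaussian 4).const_mul C)
          (.of_forall hbound)
    _ ≤ 3 * C * (Module.finrank ℝ E) ^ 2 := by
        rw [integral_const_mul]
        exact (mul_le_mul_of_nonneg_left integral_norm_pow_four_stdGaussian_le hC).trans_eq
          (by ring)

end StdGaussian

end ProbabilityTheory

theorem bias_bound_isotropic_ES_general
    (d : ℕ) (τ σ : ℝ) (hτ : 0 < τ)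
    (F : EuclideanSpace ℝ (Fin d) → ℝ)
    (hdiff : Differentiable ℝ F)
    (happrox : ∀ x g : EuclideanSpace ℝ (Fin d),
      |(F (x + σ • g) - F (x - σ • g)) / (2 * σ) - ⟪g, gradient F x⟫| ≤ τ * σ ^ 2 * ‖g‖ ^ 3)
    (θ : EuclideanSpace ℝ (Fin d))
    :
    ‖(∫ g, ((F (θ + σ • g) - F (θ - σ • g)) / (2 * σ)) • g ∂(stdGaussian d)) - gradient F θ‖ ≤ 3 * τ * σ ^ 2 * (d : ℝ) ^ 2 := by
  have hF := hdiff.continuous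
  have hv : Continuous fun g : EuclideanSpace ℝ (Fin d) =>
      (F (θ + σ • g) - F (θ - σ • g)) / (2 * σ) := by
    fun_prop
  rw [_root_.stdGaussian, map_pi_eq_stdGaussian]
  simpa [mul_assoc] using norm_integral_smul_stdGaussian_sub_le hv.aestronglyMeasurable
    (by positivity) (happrox θ)

/-- Bias bound for the isotropic ES gradient estimator, explicit constants. -/
theorem bias_bound_isotropic_ES
    (d : ℕ) (hd : 1 ≤ d) (L τ σ : ℝ) (hL : 0 < L) (hτ : 0 < τ) (hσ : 0 < σ)
    (F : EuclideanSpace ℝ (Fin d) → ℝ)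
    (hdiff : Differentiable ℝ F)
    (hlip : ∀ x y : EuclideanSpace ℝ (Fin d), |F x - F y| ≤ L * ‖x - y‖)
    (happrox : ∀ x g : EuclideanSpace ℝ (Fin d),
      |(F (x + σ • g) - F (x - σ • g)) / (2 * σ) - ⟪g, gradient F x⟫| ≤ τ * σ ^ 2 * ‖g‖ ^ 3)
    (θ : EuclideanSpace ℝ (Fin d))
    :
    ‖(∫ g, ((F (θ + σ • g) - F (θ - σ • g)) / (2 * σ)) • g ∂(stdGaussian d)) - gradient F θ‖ ≤ 3 * τ * σ ^ 2 * (d : ℝ) ^ 2 :=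
  bias_bound_isotropic_ES_general d τ σ hτ F hdiff happrox θ
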